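/- arXiv:1509.01886 — 5 statements merged into one kernel-verified Lean document; each statement's English description precedes it below -/
import Mathlib

section
/- Let U be a finite set, ρ : U → ℝ a nonnegative function, g : ℝ → ℝ a nondecreasing function, d ∈ ℝ, N ∈ ℕ, and P ≥ 0. Let 𝓕 = {S ⊆ U : |S| ≤ N and Σ_{k∈S} ρ(k) ≤ P}, and define f(S) = g(Σ_{k∈S} ρ(k)) − d·|S|. Then there exists S* ∈ 𝓕 minimizing f over 𝓕 such that ρ(k₁) ≤ ρ(k₀) for every k₁ ∈ S* and every k₀ ∈ U \ S*; i.e., some optimal served set consists of elements with the smallest values of ρ. -/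
/-! Minimize `f` over the feasible sets and, among the minimizers, minimize `Σ_{k∈S} ρ k`.
If some `k₁ ∈ S` had `ρ k₀ < ρ k₁` for a `k₀ ∉ S`, swapping `k₁` for `k₀` would keep the
cardinality, strictly lower the total `ρ` (so the budget still holds) and, `g` being monotone,
not increase `f`: a minimizer with smaller total `ρ`, a contradiction. -/

open Finset

theorem Finset.exists_min_image_lex {α β γ : Type*} [LinearOrder β] [LinearOrder γ]
    (s : Finset α) (hs : s.Nonempty) (f : α → β) (h : α → γ) :
    ∃ a ∈ s, (∀ b ∈ s, f a ≤ f b) ∧ ∀ b ∈ s, f b = f a → h a ≤ h b := by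
  obtain ⟨a, ha, hmin⟩ := s.exists_min_image (fun a => toLex (f a, h a)) hs
  refine ⟨a, ha, fun b hb => ?_, fun b hb hfb => ?_⟩
  · exact (Prod.Lex.toLex_le_toLex.mp (hmin b hb)).elim le_of_lt (fun h => h.1.le)
  · simpa [Prod.Lex.toLex_le_toLex, hfb] using hmin b hb

section Swap

variable {α M : Type*} [DecidableEq α] {s : Finset α} {a b : α}

theorem Finset.card_insert_erase_of_mem_of_notMem (ha : a ∈ s) (hb : b ∉ s) :
    #(insert b (s.erase a)) = #s := by
  rw [card_insert_of_notMem (fun h => hb (mem_of_mem_erase h)), card_erase_add_one ha]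

theorem Finset.sum_insert_erase_of_mem_of_notMem [AddCommGroup M] (ρ : α → M)
    (ha : a ∈ s) (hb : b ∉ s) :
    ∑ k ∈ insert b (s.erase a), ρ k = ∑ k ∈ s, ρ k - ρ a + ρ b := by
  rw [sum_insert (fun h => hb (mem_of_mem_erase h)), sum_erase_eq_sub ha, add_comm]

end Swap

theorem stmt_3_general {U : Type*} [Fintype U]
    (ρ : U → ℝ) (g : ℝ → ℝ) (hg : Monotone g)
    (d : ℝ) (N : ℕ) (P : ℝ) (hP : 0 ≤ P) :
    ∃ S : Finset U,
      (S.card ≤ N ∧ ∑ k ∈ S, ρ k ≤ P) ∧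
      (∀ T : Finset U, T.card ≤ N → ∑ k ∈ T, ρ k ≤ P →
        g (∑ k ∈ S, ρ k) - d * S.card ≤ g (∑ k ∈ T, ρ k) - d * T.card) ∧
      (∀ k₁ ∈ S, ∀ k₀, k₀ ∉ S → ρ k₁ ≤ ρ k₀) := by
  classical
  let feasible : Finset (Finset U) := univ.filter fun S => #S ≤ N ∧ ∑ k ∈ S, ρ k ≤ P
  let f : Finset U → ℝ := fun S => g (∑ k ∈ S, ρ k) - d * #S
  have h_empty : ∅ ∈ feasible := by simp [feasible, hP]
  obtain ⟨S, hS, hS_min, hS_lex⟩ :=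
    feasible.exists_min_image_lex ⟨∅, h_empty⟩ f fun S => ∑ k ∈ S, ρ k
  simp only [feasible, mem_filter, mem_univ, true_and] at hS hS_min hS_lex
  refine ⟨S, hS, fun T hTN hTP => hS_min T ⟨hTN, hTP⟩, fun k₁ hk₁ k₀ hk₀ => ?_⟩
  by_contra! hlt
  have h_card := card_insert_erase_of_mem_of_notMem hk₁ hk₀
  have h_sum := sum_insert_erase_of_mem_of_notMem ρ hk₁ hk₀
  set S' := insert k₀ (S.erase k₁)
  have h_feas : #S' ≤ N ∧ ∑ k ∈ S', ρ k ≤ P := ⟨h_card ▸ hS.1, by linarith [hS.2]⟩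
  have h_f : f S' ≤ f S := by
    simp only [f, h_card]
    linarith [hg (show ∑ k ∈ S', ρ k ≤ ∑ k ∈ S, ρ k by linarith)]
  have h_sum_le := hS_lex S' h_feas (le_antisymm h_f (hS_min S' h_feas))
  linarith

/-- For a finite set `U`, nonnegative `ρ`, nondecreasing `g`, reward `d`, channel
count `N` and power budget `P ≥ 0`, there is a minimizer `S*` of
`f(S) = g(Σ_{k∈S} ρ k) − d·|S|` over `𝓕 = {S : |S| ≤ N, Σ_{k∈S} ρ k ≤ P}` such that
every element of `S*` has `ρ`-value at most that of every element outside `S*`. -/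
theorem stmt_3 {U : Type*} [Fintype U] [DecidableEq U]
    (ρ : U → ℝ) (hρ : ∀ k, 0 ≤ ρ k) (g : ℝ → ℝ) (hg : Monotone g)
    (d : ℝ) (N : ℕ) (P : ℝ) (hP : 0 ≤ P) :
    ∃ S : Finset U,
      (S.card ≤ N ∧ ∑ k ∈ S, ρ k ≤ P) ∧
      (∀ T : Finset U, T.card ≤ N → ∑ k ∈ T, ρ k ≤ P →
        g (∑ k ∈ S, ρ k) - d * S.card ≤ g (∑ k ∈ T, ρ k) - d * T.card) ∧
      (∀ k₁ ∈ S, ∀ k₀, k₀ ∉ S → ρ k₁ ≤ ρ k₀) :=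
  stmt_3_general ρ g hg d N P hP
end

section
/- Let n ∈ ℕ, let ρ₁ ≤ ρ₂ ≤ … ≤ ρₙ be nonnegative reals sorted nondecreasingly, and let c > 0, d ≥ 0, P ≥ 0, N ∈ ℕ. Define 𝓕 = {S ⊆ {1,…,n} : |S| ≤ N and Σ_{k∈S} ρ_k ≤ P} and f(S) = c·Σ_{k∈S} ρ_k − d·|S|. Let m* be the largest index i ∈ {1,…,min(N,n)} such that Σ_{k=1}^{i} ρ_k ≤ P and c·ρ_i ≤ d, with m* = 0 if no such i exists. Then the prefix {1,…,m*} belongs to 𝓕 and f({1,…,m*}) ≤ f(S) for all S ∈ 𝓕. -/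
/-!
Serving user `k` changes the objective by the marginal cost `c ρ k - d`, which is nondecreasing
in `k` because `ρ` is sorted. Hence, for a fixed number `s` of served users, the cheapest choice
is the prefix of length `s`, and along feasible prefixes the objective decreases as long as the
marginal cost is nonpositive and increases afterwards; `m` is exactly the turning point.
-/

open Finset

section PrefixSums

variable {M : Type*} [AddCommMonoid M] [PartialOrder M] [IsOrderedAddMonoid M]

theorem sum_range_card_le_sum_of_monotoneOn {n : ℕ} {f : ℕ → M}
    (hf : MonotoneOn f (Set.Iio n)) {S : Finset ℕ} (hS : S ⊆ range n) :
    ∑ k ∈ range #S, f k ≤ ∑ k ∈ S, f k := by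
  induction S using Finset.induction_on_max with
  | empty => simp
  | insert a s hlt ih =>
    have has : a ∉ s := fun h => (hlt a h).false
    have han : a < n := mem_range.mp (hS (mem_insert_self a s))
    have hsa : #s ≤ a := by simpa using card_le_card fun x hx => mem_range.mpr (hlt x hx)
    rw [card_insert_of_notMem has, sum_range_succ, sum_insert has, add_comm (f a)]
    exact add_le_add (ih ((subset_insert a s).trans hS))
      (hf (hsa.trans_lt han : #s < n) han hsa)

theorem sum_range_le_sum_range_of_nonpos {w : ℕ → M} {s m : ℕ} (hsm : s ≤ m)
    (hw : ∀ k ∈ Ico s m, w k ≤ 0) : ∑ k ∈ range m, w k ≤ ∑ k ∈ range s, w k := by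
  rw [← sum_range_add_sum_Ico w hsm]
  exact add_le_of_nonpos_right (sum_nonpos hw)

theorem sum_range_le_sum_range_of_nonneg {w : ℕ → M} {m s : ℕ} (hms : m ≤ s)
    (hw : ∀ k ∈ Ico m s, 0 ≤ w k) : ∑ k ∈ range m, w k ≤ ∑ k ∈ range s, w k := by
  rw [← sum_range_add_sum_Ico w hms]
  exact le_add_of_nonneg_right (sum_nonneg hw)

end PrefixSums

theorem mul_sum_sub_mul_card {ι R : Type*} [CommRing R] (S : Finset ι) (f : ι → R) (c d : R) :
    c * ∑ i ∈ S, f i - d * #S = ∑ i ∈ S, (c * f i - d) := by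
  simp [sum_sub_distrib, mul_sum, mul_comm]

theorem sum_range_marginal_le_of_maximal {ρ : ℕ → ℝ} {c d P : ℝ} {L m s : ℕ}
    (hρ0 : ∀ k, 0 ≤ ρ k) (hle : ∀ k < m, c * ρ k ≤ d)
    (hmax : ∀ i, 1 ≤ i → i ≤ L → ∑ k ∈ range i, ρ k ≤ P → c * ρ (i - 1) ≤ d → i ≤ m)
    (hsL : s ≤ L) (hsP : ∑ k ∈ range s, ρ k ≤ P) :
    ∑ k ∈ range m, (c * ρ k - d) ≤ ∑ k ∈ range s, (c * ρ k - d) := by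
  rcases le_total s m with hsm | hms
  · exact sum_range_le_sum_range_of_nonpos hsm fun k hk =>
      sub_nonpos.mpr (hle k (mem_Ico.mp hk).2)
  · refine sum_range_le_sum_range_of_nonneg hms fun k hk => sub_nonneg.mpr ?_
    obtain ⟨hmk, hks⟩ := mem_Ico.mp hk
    by_contra! hlt
    have hfeas : ∑ j ∈ range (k + 1), ρ j ≤ P :=
      (sum_le_sum_of_subset_of_nonneg (range_subset_range.mpr hks) fun j _ _ => hρ0 j).trans hsP
    have := hmax (k + 1) (by omega) (by omega) hfeas (by simpa using hlt.le)
    omega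

theorem stmt_4_general (n : ℕ) (ρ : ℕ → ℝ) (hρ0 : ∀ k, 0 ≤ ρ k)
    (hsort : ∀ i j, i ≤ j → j < n → ρ i ≤ ρ j)
    (c d P : ℝ) (hc : 0 < c) (hP : 0 ≤ P) (N : ℕ) (m : ℕ)
    (hm : (m = 0 ∧ ∀ i, 1 ≤ i → i ≤ min N n →
            ¬((∑ k ∈ Finset.range i, ρ k) ≤ P ∧ c * ρ (i - 1) ≤ d)) ∨
          (1 ≤ m ∧ m ≤ min N n ∧ (∑ k ∈ Finset.range m, ρ k) ≤ P ∧ c * ρ (m - 1) ≤ d ∧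
            ∀ i, 1 ≤ i → i ≤ min N n → (∑ k ∈ Finset.range i, ρ k) ≤ P →
              c * ρ (i - 1) ≤ d → i ≤ m)) :
    ((Finset.range m).card ≤ N ∧ (∑ k ∈ Finset.range m, ρ k) ≤ P) ∧
    ∀ S : Finset ℕ, S ⊆ Finset.range n → S.card ≤ N → (∑ k ∈ S, ρ k) ≤ P →
      c * (∑ k ∈ Finset.range m, ρ k) - d * (Finset.range m).card ≤
        c * (∑ k ∈ S, ρ k) - d * S.card := by
  have hmono : MonotoneOn ρ (Set.Iio n) := fun i _ j hj hij => hsort i j hij hj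
  obtain ⟨hmL, hmP, hle, hmax⟩ : m ≤ min N n ∧ ∑ k ∈ range m, ρ k ≤ P ∧
      (∀ k < m, c * ρ k ≤ d) ∧ ∀ i, 1 ≤ i → i ≤ min N n → ∑ k ∈ range i, ρ k ≤ P →
        c * ρ (i - 1) ≤ d → i ≤ m := by
    rcases hm with ⟨rfl, hnone⟩ | ⟨-, hmL, hmP, hcm, hmax⟩
    · exact ⟨Nat.zero_le _, by simpa using hP, by simp,
        fun i h1 hi hiP hic => absurd ⟨hiP, hic⟩ (hnone i h1 hi)⟩
    · refine ⟨hmL, hmP, fun k hk => ?_, hmax⟩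
      have hmn : m - 1 < n := by omega
      exact (mul_le_mul_of_nonneg_left
        (hmono (Set.mem_Iio.mpr (by omega)) hmn (by omega)) hc.le).trans hcm
  refine ⟨⟨by simpa using hmL.trans (min_le_left N n), hmP⟩, fun S hS hSN hSP => ?_⟩
  have hSn : #S ≤ n := by simpa using card_le_card hS
  have hpre := sum_range_card_le_sum_of_monotoneOn hmono hS
  calc c * ∑ k ∈ range m, ρ k - d * #(range m) = ∑ k ∈ range m, (c * ρ k - d) :=
        mul_sum_sub_mul_card _ _ _ _
    _ ≤ ∑ k ∈ range #S, (c * ρ k - d) :=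
        sum_range_marginal_le_of_maximal hρ0 hle hmax (le_min hSN hSn) (hpre.trans hSP)
    _ = c * ∑ k ∈ range #S, ρ k - d * #S := by
        simpa using (mul_sum_sub_mul_card (range #S) ρ c d).symm
    _ ≤ c * ∑ k ∈ S, ρ k - d * #S := by gcongr

/-- Corollary 2 (abstract form). With `ρ 0 ≤ ρ 1 ≤ … ≤ ρ (n-1)` nonnegative and sorted
(1-based `ρᵢ` corresponds to `ρ (i-1)`), `c > 0`, `d ≥ 0`, `P ≥ 0`, `N` channels:
if `m` is the largest `i ∈ {1,…,min N n}` with `Σ_{k<i} ρ k ≤ P` and `c·ρ (i-1) ≤ d`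
(`m = 0` if there is none), then the prefix `{0,…,m-1}` is feasible and minimizes
`f(S) = c·Σ_{k∈S} ρ k − d·|S|` over all feasible `S ⊆ {0,…,n-1}`. -/
theorem stmt_4 (n : ℕ) (ρ : ℕ → ℝ) (hρ0 : ∀ k, 0 ≤ ρ k)
    (hsort : ∀ i j, i ≤ j → j < n → ρ i ≤ ρ j)
    (c d P : ℝ) (hc : 0 < c) (hd : 0 ≤ d) (hP : 0 ≤ P) (N : ℕ) (m : ℕ)
    (hm : (m = 0 ∧ ∀ i, 1 ≤ i → i ≤ min N n →
            ¬((∑ k ∈ Finset.range i, ρ k) ≤ P ∧ c * ρ (i - 1) ≤ d)) ∨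
          (1 ≤ m ∧ m ≤ min N n ∧ (∑ k ∈ Finset.range m, ρ k) ≤ P ∧ c * ρ (m - 1) ≤ d ∧
            ∀ i, 1 ≤ i → i ≤ min N n → (∑ k ∈ Finset.range i, ρ k) ≤ P →
              c * ρ (i - 1) ≤ d → i ≤ m)) :
    ((Finset.range m).card ≤ N ∧ (∑ k ∈ Finset.range m, ρ k) ≤ P) ∧
    ∀ S : Finset ℕ, S ⊆ Finset.range n → S.card ≤ N → (∑ k ∈ S, ρ k) ≤ P →
      c * (∑ k ∈ Finset.range m, ρ k) - d * (Finset.range m).card ≤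
        c * (∑ k ∈ S, ρ k) - d * S.card :=
  stmt_4_general n ρ hρ0 hsort c d P hc hP N m hm
end

section
/- Let τ > 0, ε > 0 and reals a, g with 0 < a ≤ g. Suppose 0 ≤ ρ ≤ a·ε/g. Then for every x ∈ {0} ∪ [ε, ∞) and every y ≥ 0 with x + y ≥ ρ, we have g·ρ·τ ≤ a·x·τ + g·y·τ. In particular, the grid-only choice (x, y) = (0, ρ) minimizes the cost a·x·τ + g·y·τ over all feasible (x, y). -/
/-! Away from `x = 0` the battery must deliver at least `ε`, which already costs `a·ε ≥ g·ρ`;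
at `x = 0` the grid has to cover all of `ρ` at price `g`. The time factor `τ ≥ 0` only scales. -/

theorem grid_cost_le_cost {a g ε ρ x y : ℝ} (ha : 0 ≤ a) (hg : 0 < g) (hρ : ρ ≤ a * ε / g)
    (hx : x ∈ ({0} : Set ℝ) ∪ Set.Ici ε) (hy : 0 ≤ y) (hxy : ρ ≤ x + y) :
    g * ρ ≤ a * x + g * y := by
  rcases hx with rfl | hεx
  · have hρy : ρ ≤ y := by linarith
    simpa using mul_le_mul_of_nonneg_left hρy hg.le
  · have hεx : ε ≤ x := hεx
    calc g * ρ ≤ a * ε := by rw [mul_comm]; exact (le_div_iff₀ hg).1 hρ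
      _ ≤ a * x := mul_le_mul_of_nonneg_left hεx ha
      _ ≤ a * x + g * y := le_add_of_nonneg_right (mul_nonneg hg.le hy)

theorem stmt_7_general (τ ε a g ρ : ℝ) (hτ : 0 < τ) (ha : 0 < a) (hag : a ≤ g)
    (hρ : ρ ≤ a * ε / g) :
    ∀ x y : ℝ, x ∈ ({0} : Set ℝ) ∪ Set.Ici ε → 0 ≤ y → ρ ≤ x + y →
      g * ρ * τ ≤ a * x * τ + g * y * τ := by
  intro x y hx hy hxy
  have hcost := grid_cost_le_cost ha.le (ha.trans_le hag) hρ hx hy hxy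
  rw [← add_mul]
  exact mul_le_mul_of_nonneg_right hcost hτ.le

/-- Lemma 2, first case: if `0 < a ≤ g` and `0 ≤ ρ ≤ a·ε/g`, then for every harvested
power `x ∈ {0} ∪ [ε, ∞)` and grid power `y ≥ 0` with `x + y ≥ ρ`, the grid-only cost
`g·ρ·τ` is minimal: `g·ρ·τ ≤ a·x·τ + g·y·τ`. -/
theorem stmt_7 (τ ε a g ρ : ℝ) (hτ : 0 < τ) (hε : 0 < ε) (ha : 0 < a) (hag : a ≤ g)
    (hρ0 : 0 ≤ ρ) (hρ : ρ ≤ a * ε / g) :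
    ∀ x y : ℝ, x ∈ ({0} : Set ℝ) ∪ Set.Ici ε → 0 ≤ y → ρ ≤ x + y →
      g * ρ * τ ≤ a * x * τ + g * y * τ :=
  stmt_7_general τ ε a g ρ hτ ha hag hρ
end

section
/- Let τ > 0, ε > 0 and reals a, g with 0 < a ≤ g. Suppose a·ε/g < ρ ≤ ε. Then (x, y) = (ε, 0) is feasible (since ε ≥ ρ), and for every x ∈ {0} ∪ [ε, ∞) and every y ≥ 0 with x + y ≥ ρ, we have a·ε·τ ≤ a·x·τ + g·y·τ. In particular, consuming exactly the minimum allowed harvested power ε and no grid power minimizes the cost. -/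
/-! Below the threshold `ε`, the only feasible alternative to `x ≥ ε` is `x = 0`, which needs
grid power `y ≥ ρ > a ε / g`, costing more than `a ε`; any `x ≥ ε` costs at least `a ε`. -/

theorem le_add_mul_of_feasible {a g ε ρ x y : ℝ} (ha : 0 ≤ a) (hg : 0 < g)
    (hρ : a * ε / g < ρ) (hx : x = 0 ∨ ε ≤ x) (hy : 0 ≤ y) (hxy : ρ ≤ x + y) :
    a * ε ≤ a * x + g * y := by
  rcases hx with rfl | hεx
  · have hgy : a * ε < y * g := (div_lt_iff₀ hg).mp (hρ.trans_le (by simpa using hxy))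
    linarith
  · linarith [mul_le_mul_of_nonneg_left hεx ha, mul_nonneg hg.le hy]

theorem stmt_8_general (τ ε a g ρ : ℝ) (hτ : 0 < τ) (ha : 0 < a) (hag : a ≤ g)
    (hρ1 : a * ε / g < ρ) (hρ2 : ρ ≤ ε) :
    ρ ≤ ε + 0 ∧
    ∀ x y : ℝ, x ∈ ({0} : Set ℝ) ∪ Set.Ici ε → 0 ≤ y → ρ ≤ x + y →
      a * ε * τ ≤ a * x * τ + g * y * τ := by
  refine ⟨by simpa using hρ2, fun x y hx hy hxy => ?_⟩
  have hcost := le_add_mul_of_feasible ha.le (ha.trans_le hag) hρ1 hx hy hxy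
  rw [← add_mul]
  exact mul_le_mul_of_nonneg_right hcost hτ.le

/-- Lemma 2, second case: if `0 < a ≤ g` and `a·ε/g < ρ ≤ ε`, then `(x, y) = (ε, 0)` is
feasible (`ρ ≤ ε`), and for every harvested power `x ∈ {0} ∪ [ε, ∞)` and grid power
`y ≥ 0` with `x + y ≥ ρ`, we have `a·ε·τ ≤ a·x·τ + g·y·τ`. -/
theorem stmt_8 (τ ε a g ρ : ℝ) (hτ : 0 < τ) (hε : 0 < ε) (ha : 0 < a) (hag : a ≤ g)
    (hρ1 : a * ε / g < ρ) (hρ2 : ρ ≤ ε) :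
    ρ ≤ ε + 0 ∧
    ∀ x y : ℝ, x ∈ ({0} : Set ℝ) ∪ Set.Ici ε → 0 ≤ y → ρ ≤ x + y →
      a * ε * τ ≤ a * x * τ + g * y * τ :=
  stmt_8_general τ ε a g ρ hτ ha hag hρ1 hρ2
end

section
/- Let θ ≥ 0, E_max ≥ 0 and D > 0 be reals. Let B, e, d : ℕ → ℝ and E : ℕ → ℝ be sequences satisfying: B(0) = 0; for every t, 0 ≤ E(t) ≤ E_max; e(t) = E(t) if B(t) ≤ θ and e(t) = 0 if B(t) > θ; 0 ≤ d(t) ≤ D; d(t) = 0 whenever B(t) < D; and B(t+1) = B(t) − d(t) + e(t). Then for every t ∈ ℕ, 0 ≤ B(t) ≤ θ + E_max. -/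
/-!
Induction on `t`. Harvested energy is never negative, and the battery is only discharged
(by at most `D`) when it holds at least `D`, so the level stays nonnegative. Energy is
harvested only when the level is at most `θ`, and then at most `E_max` is added, so the
level never exceeds `θ + E_max`.
-/

namespace BatteryLevel

variable {b d e E θ : ℝ}

theorem harvest_nonneg (he1 : b ≤ θ → e = E) (he2 : θ < b → e = 0) (hE : 0 ≤ E) : 0 ≤ e := by
  rcases le_or_gt b θ with hb | hb
  · exact he1 hb ▸ hE
  · exact (he2 hb).ge

theorem step_nonneg {D : ℝ} (hb : 0 ≤ b) (he : 0 ≤ e) (hdD : d ≤ D) (hd0 : b < D → d = 0) :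
    0 ≤ b - d + e := by
  rcases lt_or_ge b D with hbD | hbD
  · rw [hd0 hbD]
    linarith
  · linarith

theorem step_le {M : ℝ} (hb : b ≤ θ + M) (hd : 0 ≤ d) (he1 : b ≤ θ → e = E)
    (he2 : θ < b → e = 0) (hEM : E ≤ M) : b - d + e ≤ θ + M := by
  rcases le_or_gt b θ with hbθ | hbθ
  · rw [he1 hbθ]
    linarith
  · rw [he2 hbθ]
    linarith

end BatteryLevel

open BatteryLevel in
theorem stmt_10_general (θ Emax D : ℝ) (hθ : 0 ≤ θ) (hEmax : 0 ≤ Emax)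
    (B e d E : ℕ → ℝ) (hB0 : B 0 = 0)
    (hE : ∀ t, 0 ≤ E t ∧ E t ≤ Emax)
    (he1 : ∀ t, B t ≤ θ → e t = E t)
    (he2 : ∀ t, θ < B t → e t = 0)
    (hd : ∀ t, 0 ≤ d t ∧ d t ≤ D)
    (hd0 : ∀ t, B t < D → d t = 0)
    (hdyn : ∀ t, B (t + 1) = B t - d t + e t) :
    ∀ t, 0 ≤ B t ∧ B t ≤ θ + Emax := by
  intro t
  induction t with
  | zero => exact ⟨hB0.ge, hB0 ▸ add_nonneg hθ hEmax⟩
  | succ t ih =>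
    have he : 0 ≤ e t := harvest_nonneg (he1 t) (he2 t) (hE t).1
    rw [hdyn t]
    exact ⟨step_nonneg ih.1 he (hd t).2 (hd0 t),
      step_le ih.2 (hd t).1 (he1 t) (he2 t) (hE t).2⟩

/-- Proposition 3 (deterministic form): under the harvesting rule `e t = E t` if
`B t ≤ θ` and `e t = 0` otherwise, with battery output `0 ≤ d t ≤ D` vanishing
whenever `B t < D`, and dynamics `B (t+1) = B t − d t + e t` with `B 0 = 0`, the
battery level stays within `[0, θ + E_max]`. -/
theorem stmt_10 (θ Emax D : ℝ) (hθ : 0 ≤ θ) (hEmax : 0 ≤ Emax) (hD : 0 < D)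
    (B e d E : ℕ → ℝ) (hB0 : B 0 = 0)
    (hE : ∀ t, 0 ≤ E t ∧ E t ≤ Emax)
    (he1 : ∀ t, B t ≤ θ → e t = E t)
    (he2 : ∀ t, θ < B t → e t = 0)
    (hd : ∀ t, 0 ≤ d t ∧ d t ≤ D)
    (hd0 : ∀ t, B t < D → d t = 0)
    (hdyn : ∀ t, B (t + 1) = B t - d t + e t) :
    ∀ t, 0 ≤ B t ∧ B t ≤ θ + Emax :=
  stmt_10_general θ Emax D hθ hEmax B e d E hB0 hE he1 he2 hd hd0 hdyn
end
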